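/- If C is the vertex set of an induced cycle on four vertices in the set-cover gadget graph G(U,𝒮), then C is of one of the following three forms: C = {g, a_i, c_i, s_j} for some i, j with u_i ∈ S_j; or C = {g, b_i, c_i, s_j} for some i, j with u_i ∈ S_j; or C = {g, a_i, c_i, b_i} for some i. -/
import Mathlib


/-- Vertices of the set-cover gadget graph: a vertex `s j` for every set `S_j`,
vertices `a i`, `b i`, `c i` for every universe element `u_i`, and a special vertex `g`. -/
inductive SCVert (n m : ℕ) where
  | s : Fin m → SCVert n m
  | a : Fin n → SCVert n m
  | b : Fin n → SCVert n m
  | c : Fin n → SCVert n m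
  | g : SCVert n m
deriving DecidableEq

/-- The base relation for the edges of the set-cover gadget graph for the family
`S : Fin m → Set (Fin n)`. -/
def scRel (n m : ℕ) (S : Fin m → Set (Fin n)) : SCVert n m → SCVert n m → Prop
  | .s _, .s _ => True
  | .g, .s _ => True
  | .g, .a _ => True
  | .g, .b _ => True
  | .a i, .c i' => i = i'
  | .b i, .c i' => i = i'
  | .c i, .s j => i ∈ S j
  | _, _ => False

/-- The set-cover gadget graph `G(U, 𝒮)`. -/
def scGadget (n m : ℕ) (S : Fin m → Set (Fin n)) : SimpleGraph (SCVert n m) :=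
  SimpleGraph.fromRel (scRel n m S)

/-- `C` is (the vertex set of) an induced cycle on `ℓ` vertices of `G`. -/
def IsInducedCycle {α : Type*} (G : SimpleGraph α) (ℓ : ℕ) (C : Set α) : Prop :=
  C.ncard = ℓ ∧ Nonempty (G.induce C ≃g SimpleGraph.cycleGraph ℓ)

section Aux
variable {n m : ℕ} {S : Fin m → Set (Fin n)}

lemma sc_adjA {i : Fin n} {x : SCVert n m} (h : (scGadget n m S).Adj x (.a i)) :
    x = .g ∨ x = .c i := by
  cases x <;> simp_all [scGadget, SimpleGraph.fromRel_adj, scRel]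

lemma sc_adjB {i : Fin n} {x : SCVert n m} (h : (scGadget n m S).Adj x (.b i)) :
    x = .g ∨ x = .c i := by
  cases x <;> simp_all [scGadget, SimpleGraph.fromRel_adj, scRel]

lemma sc_adjC {i : Fin n} {x : SCVert n m} (h : (scGadget n m S).Adj x (.c i)) :
    x = .a i ∨ x = .b i ∨ ∃ j, x = .s j ∧ i ∈ S j := by
  cases x <;> simp_all [scGadget, SimpleGraph.fromRel_adj, scRel]

lemma sc_nonadjG {x : SCVert n m} (hx : x ≠ .g) (h : ¬ (scGadget n m S).Adj .g x) :
    ∃ i, x = .c i := by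
  cases x <;> simp_all [scGadget, SimpleGraph.fromRel_adj, scRel]

lemma sc_adjSS {j j' : Fin m} (h : j ≠ j') :
    (scGadget n m S).Adj (.s j) (.s j') := by
  simp_all [scGadget, SimpleGraph.fromRel_adj, scRel]

lemma sc_nadjCC {i i' : Fin n} : ¬ (scGadget n m S).Adj (.c i) (.c i') := by
  simp [scGadget, SimpleGraph.fromRel_adj, scRel]

lemma sc_isCS {x : SCVert n m} (hg : x ≠ .g) (ha : ∀ i, x ≠ .a i) (hb : ∀ i, x ≠ .b i) :
    (∃ i, x = .c i) ∨ ∃ j, x = .s j := by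
  cases x <;> simp_all

lemma sc_noA {i : Fin n} {y z : SCVert n m} (h1 : (scGadget n m S).Adj y (.a i))
    (h2 : (scGadget n m S).Adj z (.a i)) (hy : y ≠ .g) (hz : z ≠ .g) (hyz : y ≠ z) : False := by
  rcases sc_adjA h1 with rfl | rfl
  · exact hy rfl
  · rcases sc_adjA h2 with rfl | rfl
    · exact hz rfl
    · exact hyz rfl

lemma sc_noB {i : Fin n} {y z : SCVert n m} (h1 : (scGadget n m S).Adj y (.b i))
    (h2 : (scGadget n m S).Adj z (.b i)) (hy : y ≠ .g) (hz : z ≠ .g) (hyz : y ≠ z) : False := by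
  rcases sc_adjB h1 with rfl | rfl
  · exact hy rfl
  · rcases sc_adjB h2 with rfl | rfl
    · exact hz rfl
    · exact hyz rfl

lemma sc_hasG {v0 v1 v2 v3 : SCVert n m}
    (h01 : (scGadget n m S).Adj v0 v1) (h12 : (scGadget n m S).Adj v1 v2)
    (h23 : (scGadget n m S).Adj v2 v3) (h30 : (scGadget n m S).Adj v3 v0)
    (n02 : ¬ (scGadget n m S).Adj v0 v2) (n13 : ¬ (scGadget n m S).Adj v1 v3)
    (d02 : v0 ≠ v2) (d13 : v1 ≠ v3) :
    v0 = .g ∨ v1 = .g ∨ v2 = .g ∨ v3 = .g := by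
  by_contra hng
  push_neg at hng
  obtain ⟨g0, g1, g2, g3⟩ := hng
  -- no vertex is a or b
  have na0 : ∀ i, v0 ≠ .a i := by
    rintro i rfl; exact sc_noA h01.symm h30 g1 g3 d13
  have na1 : ∀ i, v1 ≠ .a i := by
    rintro i rfl; exact sc_noA h12.symm h01 g2 g0 (fun h => d02 h.symm)
  have na2 : ∀ i, v2 ≠ .a i := by
    rintro i rfl; exact sc_noA h23.symm h12 g3 g1 (fun h => d13 h.symm)
  have na3 : ∀ i, v3 ≠ .a i := by
    rintro i rfl; exact sc_noA h30.symm h23 g0 g2 d02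
  have nb0 : ∀ i, v0 ≠ .b i := by
    rintro i rfl; exact sc_noB h01.symm h30 g1 g3 d13
  have nb1 : ∀ i, v1 ≠ .b i := by
    rintro i rfl; exact sc_noB h12.symm h01 g2 g0 (fun h => d02 h.symm)
  have nb2 : ∀ i, v2 ≠ .b i := by
    rintro i rfl; exact sc_noB h23.symm h12 g3 g1 (fun h => d13 h.symm)
  have nb3 : ∀ i, v3 ≠ .b i := by
    rintro i rfl; exact sc_noB h30.symm h23 g0 g2 d02
  have cs0 := sc_isCS g0 na0 nb0
  have cs1 := sc_isCS g1 na1 nb1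
  have cs2 := sc_isCS g2 na2 nb2
  have cs3 := sc_isCS g3 na3 nb3
  -- every edge must be between a c and an s; so the two s's (diagonal) are adjacent
  rcases cs0 with ⟨i0, rfl⟩ | ⟨j0, rfl⟩
  · rcases cs1 with ⟨i1, rfl⟩ | ⟨j1, rfl⟩
    · exact sc_nadjCC h01
    · rcases cs3 with ⟨i3, rfl⟩ | ⟨j3, rfl⟩
      · exact sc_nadjCC h30
      · exact n13 (sc_adjSS (fun h => d13 (by rw [h])))
  · rcases cs2 with ⟨i2, rfl⟩ | ⟨j2, rfl⟩
    · rcases cs1 with ⟨i1, rfl⟩ | ⟨j1, rfl⟩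
      · exact sc_nadjCC h12
      · rcases cs3 with ⟨i3, rfl⟩ | ⟨j3, rfl⟩
        · exact sc_nadjCC h23
        · exact n13 (sc_adjSS (fun h => d13 (by rw [h])))
    · exact n02 (sc_adjSS (fun h => d02 (by rw [h])))

lemma sc_key {C : Set (SCVert n m)} {v1 v2 v3 : SCVert n m}
    (h01 : (scGadget n m S).Adj .g v1) (h12 : (scGadget n m S).Adj v1 v2)
    (h23 : (scGadget n m S).Adj v2 v3) (h30 : (scGadget n m S).Adj v3 .g)
    (n02 : ¬ (scGadget n m S).Adj .g v2) (n13 : ¬ (scGadget n m S).Adj v1 v3)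
    (d02 : (SCVert.g : SCVert n m) ≠ v2) (d13 : v1 ≠ v3)
    (hCeq : C = {.g, v1, v2, v3}) :
    (∃ i j, i ∈ S j ∧ C = {SCVert.g, SCVert.a i, SCVert.c i, SCVert.s j}) ∨
    (∃ i j, i ∈ S j ∧ C = {SCVert.g, SCVert.b i, SCVert.c i, SCVert.s j}) ∨
    (∃ i, C = {SCVert.g, SCVert.a i, SCVert.c i, SCVert.b i}) := by
  obtain ⟨i, rfl⟩ := sc_nonadjG (fun h => d02 h.symm) n02
  subst hCeq
  rcases sc_adjC h12 with rfl | rfl | ⟨j1, rfl, hj1⟩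
  · rcases sc_adjC h23.symm with rfl | rfl | ⟨j3, rfl, hj3⟩
    · exact absurd rfl d13
    · exact Or.inr (Or.inr ⟨i, rfl⟩)
    · exact Or.inl ⟨i, j3, hj3, by ext x; simp only [Set.mem_insert_iff, Set.mem_singleton_iff]; all_goals tauto⟩
  · rcases sc_adjC h23.symm with rfl | rfl | ⟨j3, rfl, hj3⟩
    · exact Or.inr (Or.inr ⟨i, by ext x; simp only [Set.mem_insert_iff, Set.mem_singleton_iff]; all_goals tauto⟩)
    · exact absurd rfl d13
    · exact Or.inr (Or.inl ⟨i, j3, hj3, by ext x; simp only [Set.mem_insert_iff, Set.mem_singleton_iff]; all_goals tauto⟩)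
  · rcases sc_adjC h23.symm with rfl | rfl | ⟨j3, rfl, hj3⟩
    · exact Or.inl ⟨i, j1, hj1, by ext x; simp only [Set.mem_insert_iff, Set.mem_singleton_iff]; all_goals tauto⟩
    · exact Or.inr (Or.inl ⟨i, j1, hj1, by ext x; simp only [Set.mem_insert_iff, Set.mem_singleton_iff]; all_goals tauto⟩)
    · exact absurd (sc_adjSS (fun h => d13 (by rw [h]))) n13

end Aux

/-- Every induced four-cycle of the set-cover gadget graph is of the form
`{g, a_i, c_i, s_j}` or `{g, b_i, c_i, s_j}` (with `u_i ∈ S_j`), or `{g, a_i, c_i, b_i}`. -/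
theorem stmt_12 (n m : ℕ) (S : Fin m → Set (Fin n)) (C : Set (SCVert n m))
    (hC : IsInducedCycle (scGadget n m S) 4 C) :
    (∃ i j, i ∈ S j ∧ C = {SCVert.g, SCVert.a i, SCVert.c i, SCVert.s j}) ∨
    (∃ i j, i ∈ S j ∧ C = {SCVert.g, SCVert.b i, SCVert.c i, SCVert.s j}) ∨
    (∃ i, C = {SCVert.g, SCVert.a i, SCVert.c i, SCVert.b i}) := by
  obtain ⟨hcard, ⟨e⟩⟩ := hC
  set w : Fin 4 → SCVert n m := fun k => (e.symm k : SCVert n m) with hw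
  have hmem : ∀ k, w k ∈ C := fun k => (e.symm k).2
  have hadj : ∀ k l : Fin 4, (scGadget n m S).Adj (w k) (w l) ↔ (SimpleGraph.cycleGraph 4).Adj k l := by
    intro k l
    have h := e.symm.map_adj_iff (v := k) (w := l)
    simp only [hw]
    simpa [SimpleGraph.comap_adj, SimpleGraph.induce] using h
  have hinj : Function.Injective w := by
    intro k l h
    exact e.symm.injective (Subtype.val_injective h)
  have hCeq : C = {w 0, w 1, w 2, w 3} := by
    ext x; constructor
    · intro hx
      have hx2 : x = w (e ⟨x, hx⟩) := by simp [hw]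
      have : ∃ k, x = w k := ⟨_, hx2⟩
      obtain ⟨k, rfl⟩ := this
      fin_cases k <;> simp
    · intro hx
      rcases hx with rfl | rfl | rfl | rfl <;> exact hmem _
  have h01 : (scGadget n m S).Adj (w 0) (w 1) := (hadj 0 1).2 (by decide)
  have h12 : (scGadget n m S).Adj (w 1) (w 2) := (hadj 1 2).2 (by decide)
  have h23 : (scGadget n m S).Adj (w 2) (w 3) := (hadj 2 3).2 (by decide)
  have h30 : (scGadget n m S).Adj (w 3) (w 0) := (hadj 3 0).2 (by decide)
  have n02 : ¬ (scGadget n m S).Adj (w 0) (w 2) := fun h => absurd ((hadj 0 2).1 h) (by decide)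
  have n13 : ¬ (scGadget n m S).Adj (w 1) (w 3) := fun h => absurd ((hadj 1 3).1 h) (by decide)
  have d02 : w 0 ≠ w 2 := fun h => absurd (hinj h) (by decide)
  have d13 : w 1 ≠ w 3 := fun h => absurd (hinj h) (by decide)
  rcases sc_hasG h01 h12 h23 h30 n02 n13 d02 d13 with hg | hg | hg | hg
  · exact sc_key (hg ▸ h01) h12 h23 (hg ▸ h30) (hg ▸ n02) n13 (hg ▸ d02) d13 (hg ▸ hCeq)
  · refine sc_key (hg ▸ h12) h23 h30 (hg ▸ h01) (hg ▸ n13) (fun h => n02 h.symm)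
      (hg ▸ d13) (fun h => d02 h.symm) ?_
    rw [hCeq, ← hg]; ext x; simp only [Set.mem_insert_iff, Set.mem_singleton_iff]; all_goals tauto
  · refine sc_key (hg ▸ h23) h30 h01 (hg ▸ h12) (hg ▸ fun h => n02 h.symm) (fun h => n13 h.symm)
      (hg ▸ fun h => d02 h.symm) (fun h => d13 h.symm) ?_
    rw [hCeq, ← hg]; ext x; simp only [Set.mem_insert_iff, Set.mem_singleton_iff]; all_goals tauto
  · refine sc_key (hg ▸ h30) h01 h12 (hg ▸ h23) (hg ▸ fun h => n13 h.symm) n02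
      (hg ▸ fun h => d13 h.symm) d02 ?_
    rw [hCeq, ← hg]; ext x; simp only [Set.mem_insert_iff, Set.mem_singleton_iff]; all_goals tauto
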